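/- arXiv:1405.4037 — 2 statements merged into one kernel-verified Lean document; each statement's English description precedes it below -/
import Mathlib

section
/- Let k be a field of characteristic 0 and G a finite group. Suppose F₁/k and F₂/k are field extensions and ρ₁ : G → GL_n(F₁), ρ₂ : G → GL_n(F₂) are representations of G with the same character χ : G → k (that is, trace(ρ₁(g)) = trace(ρ₂(g)) = χ(g) ∈ k for all g ∈ G). Then the k-algebras Env_k(ρ₁) and Env_k(ρ₂) are isomorphic. -/
/-!
Both envelopes are images of the group algebra `k[G]`, which is semisimple since `char k = 0`.
In a semisimple ring every principal left ideal `k[G] x` is generated by an idempotent `e`, and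
the image of an idempotent in a matrix algebra over a field of characteristic zero vanishes as
soon as its trace does. Hence `ρᵢ(x) = 0` iff the trace of `ρᵢ(xy)` vanishes for all `y`, and
these traces are the `k`-linear extension of `χ`. So both representations have the same kernel
on `k[G]`, and the first isomorphism theorem identifies both envelopes with the same quotient.
-/

open Matrix

/-- The character of a matrix representation. -/
noncomputable def repChar {G F : Type*} [Group G] [Field F] {n : ℕ}
    (ρ : G →* GL (Fin n) F) (g : G) : F :=
  Matrix.trace (ρ g : Matrix (Fin n) (Fin n) F)

/-- The `k`-envelope of a matrix representation `ρ : G → GL_n(F)`: the `k`-subalgebra of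
`M_n(F)` spanned by `ρ(G)`. -/
noncomputable def envelope (k : Type*) {F G : Type*} [Field k] [Field F] [Algebra k F]
    [Group G] {n : ℕ} (ρ : G →* GL (Fin n) F) : Subalgebra k (Matrix (Fin n) (Fin n) F) :=
  Algebra.adjoin k (Set.range fun g => (ρ g : Matrix (Fin n) (Fin n) F))

theorem Matrix.IsIdempotentElem.eq_zero_of_trace_eq_zero {F ι : Type*} [Field F] [CharZero F]
    [Fintype ι] [DecidableEq ι] {P : Matrix ι ι F} (hP : IsIdempotentElem P)
    (htr : P.trace = 0) : P = 0 := by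
  have hlin : IsIdempotentElem (toLin' P) := hP.map toLinAlgEquiv'
  refine toLin'.map_eq_zero_iff.1 <| LinearMap.IsIdempotentElem.eq_zero_of_trace_eq_zero hlin ?_
  rwa [trace_toLin'_eq]

section TraceForm

variable {A : Type*} [Ring A] [IsSemisimpleRing A]

theorem eq_zero_iff_forall_trace_mul_eq_zero {F ι Φ : Type*} [Field F] [CharZero F] [Fintype ι]
    [DecidableEq ι] [FunLike Φ A (Matrix ι ι F)] [RingHomClass Φ A (Matrix ι ι F)] (φ : Φ)
    (x : A) :
    φ x = 0 ↔ ∀ y, (φ (x * y)).trace = 0 := by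
  refine ⟨fun hx y ↦ by rw [map_mul, hx, zero_mul, trace_zero], fun hx ↦ ?_⟩
  obtain ⟨e, he, hxe⟩ := IsSemisimpleRing.ideal_eq_span_idempotent (Ideal.span {x})
  obtain ⟨r, rfl⟩ : ∃ r, r * x = e :=
    Ideal.mem_span_singleton'.1 (hxe ▸ Ideal.subset_span rfl)
  obtain ⟨c, hc⟩ : ∃ c, c * (r * x) = x :=
    Ideal.mem_span_singleton'.1 (hxe ▸ Ideal.subset_span rfl)
  have htr : (φ (r * x)).trace = 0 := by
    rw [map_mul, trace_mul_comm, ← map_mul, hx]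
  rw [← hc, map_mul, (he.map φ).eq_zero_of_trace_eq_zero htr, mul_zero]

theorem RingHom.ker_eq_of_trace_eq_zero_iff {F₁ F₂ ι₁ ι₂ Φ₁ Φ₂ : Type*} [Field F₁] [Field F₂]
    [CharZero F₁] [CharZero F₂] [Fintype ι₁] [Fintype ι₂] [DecidableEq ι₁] [DecidableEq ι₂]
    [FunLike Φ₁ A (Matrix ι₁ ι₁ F₁)] [RingHomClass Φ₁ A (Matrix ι₁ ι₁ F₁)]
    [FunLike Φ₂ A (Matrix ι₂ ι₂ F₂)] [RingHomClass Φ₂ A (Matrix ι₂ ι₂ F₂)] (φ₁ : Φ₁) (φ₂ : Φ₂)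
    (h : ∀ z, (φ₁ z).trace = 0 ↔ (φ₂ z).trace = 0) : RingHom.ker φ₁ = RingHom.ker φ₂ := by
  ext x
  simp only [RingHom.mem_ker, eq_zero_iff_forall_trace_mul_eq_zero, h]

end TraceForm

noncomputable def AlgHom.rangeEquivOfKerEq {R A B C : Type*} [CommSemiring R] [Ring A]
    [Semiring B] [Semiring C] [Algebra R A] [Algebra R B] [Algebra R C]
    {f : A →ₐ[R] B} {g : A →ₐ[R] C} (h : RingHom.ker f = RingHom.ker g) :
    f.range ≃ₐ[R] g.range :=
  (Ideal.quotientKerAlgEquivOfSurjective f.rangeRestrict_surjective).symm.trans <|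
    (Ideal.quotientEquivAlgOfEq R (by rw [ker_rangeRestrict, ker_rangeRestrict, h])).trans <|
      Ideal.quotientKerAlgEquivOfSurjective g.rangeRestrict_surjective

section RepLift

variable {k F G : Type*} [Field k] [Field F] [Algebra k F] [Group G] {n : ℕ}

noncomputable def repLift (k : Type*) [Field k] [Algebra k F] (ρ : G →* GL (Fin n) F) :
    MonoidAlgebra k G →ₐ[k] Matrix (Fin n) (Fin n) F :=
  MonoidAlgebra.lift k _ G ((Units.coeHom _).comp ρ)

theorem envelope_eq_range_repLift (ρ : G →* GL (Fin n) F) :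
    envelope k ρ = (repLift k ρ).range := by
  refine le_antisymm (Algebra.adjoin_le ?_) ?_
  · rintro _ ⟨g, rfl⟩
    exact ⟨MonoidAlgebra.of k G g, by simp [repLift]⟩
  · rintro _ ⟨x, rfl⟩
    change repLift k ρ x ∈ envelope k ρ
    induction x using MonoidAlgebra.induction_on with
    | of g => exact Algebra.subset_adjoin ⟨g, by simp [repLift]⟩
    | add x y hx hy => rw [map_add]; exact add_mem hx hy
    | smul c x hx => rw [map_smul]; exact Subalgebra.smul_mem _ hx c

theorem trace_repLift (ρ : G →* GL (Fin n) F) (χ : G → k)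
    (h : ∀ g, repChar ρ g = algebraMap k F (χ g)) (z : MonoidAlgebra k G) :
    (repLift k ρ z).trace = algebraMap k F ((MonoidAlgebra.basis G k).constr k χ z) := by
  have hlin : traceLinearMap (Fin n) k F ∘ₗ (repLift k ρ).toLinearMap =
      Algebra.linearMap k F ∘ₗ (MonoidAlgebra.basis G k).constr k χ :=
    (MonoidAlgebra.basis G k).ext fun g ↦ by
      rw [LinearMap.comp_apply, LinearMap.comp_apply, Module.Basis.constr_basis]
      simpa [repLift, repChar] using h g
  exact LinearMap.congr_fun hlin z

end RepLift

/-- Let `k` be a field of characteristic zero and `G` a finite group.  If `ρ₁` and `ρ₂`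
are representations of `G` over field extensions `F₁/k` and `F₂/k` having the same
`k`-valued character `χ`, then the `k`-algebras `Env_k(ρ₁)` and `Env_k(ρ₂)` are
isomorphic. -/
theorem envelope_welldefined {k : Type*} [Field k] [CharZero k]
    {F₁ F₂ : Type*} [Field F₁] [Field F₂] [Algebra k F₁] [Algebra k F₂]
    {G : Type*} [Group G] [Finite G] {n : ℕ}
    (ρ₁ : G →* GL (Fin n) F₁) (ρ₂ : G →* GL (Fin n) F₂)
    (χ : G → k)
    (h₁ : ∀ g : G, repChar ρ₁ g = algebraMap k F₁ (χ g))
    (h₂ : ∀ g : G, repChar ρ₂ g = algebraMap k F₂ (χ g)) :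
    Nonempty ((envelope k ρ₁) ≃ₐ[k] (envelope k ρ₂)) := by
  have : NeZero (Nat.card G : k) := ⟨Nat.cast_ne_zero.2 Nat.card_pos.ne'⟩
  have : CharZero F₁ := charZero_of_injective_algebraMap (algebraMap k F₁).injective
  have : CharZero F₂ := charZero_of_injective_algebraMap (algebraMap k F₂).injective
  have hker : RingHom.ker (repLift k ρ₁) = RingHom.ker (repLift k ρ₂) :=
    RingHom.ker_eq_of_trace_eq_zero_iff (repLift k ρ₁) (repLift k ρ₂)
      fun z ↦ by simp only [trace_repLift ρ₁ χ h₁, trace_repLift ρ₂ χ h₂,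
        map_eq_zero_iff _ (algebraMap k _).injective]
  exact ⟨(Subalgebra.equivOfEq _ _ (envelope_eq_range_repLift ρ₁)).trans <|
    (AlgHom.rangeEquivOfKerEq hker).trans
      (Subalgebra.equivOfEq _ _ (envelope_eq_range_repLift ρ₂)).symm⟩
end

section
/- Let G be a finite group, k ⊆ K a field extension, and suppose ρ : G → GL_n(K) is K-equivalent to a direct sum a₁ρ₁ ⊕ ⋯ ⊕ a_sρ_s, where ρ_i : G → GL_{n_i}(K) are representations and a_i ≥ 1 are integers. If each ρ_i descends to an intermediate field k ⊆ K_i ⊆ K with trdeg_k(K_i) = d_i, then ρ descends to an intermediate field k ⊆ K₀ ⊆ K with trdeg_k(K₀) ≤ d₁ + ⋯ + d_s. Consequently, ed(ρ) ≤ ed(ρ₁) + ⋯ + ed(ρ_s). -/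
/-!
Pick in each `Kᵢ` a transcendence basis `Bᵢ` (of size `dᵢ`). Every `Kᵢ`, hence the compositum
`K₀ = K₁ ⋯ K_s`, is algebraic over `k(B₁ ∪ ⋯ ∪ B_s)`, so by the exchange property of the
algebraic matroid no algebraically independent subset of `K₀` has more than `∑ dᵢ` elements.
Conjugating every `ρᵢ` into `GL_{nᵢ}(Kᵢ) ⊆ GL_{nᵢ}(K₀)` block by block conjugates
`a₁ρ₁ ⊕ ⋯ ⊕ a_sρ_s`, and with it `ρ`, into `GL_n(K₀)`.
-/

open Matrix

/-- A representation `ρ : G → GL_n(K)` descends to an intermediate field `K₀` of `K/k` if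
it is `K`-equivalent (conjugate) to the base change of some representation over `K₀`. -/
def Descends {k K : Type*} [Field k] [Field K] [Algebra k K] {G : Type*} [Group G] {n : ℕ}
    (ρ : G →* GL (Fin n) K) (K₀ : IntermediateField k K) : Prop :=
  ∃ ρ' : G →* GL (Fin n) K₀, ∃ M : GL (Fin n) K,
    ∀ g, ρ g = M * Units.map ((algebraMap K₀ K).mapMatrix).toMonoidHom (ρ' g) * M⁻¹

/-- The transcendence degree of `K₀` over `k` is at most `d`. -/
def TrdegLE {k K : Type*} [Field k] [Field K] [Algebra k K]
    (K₀ : IntermediateField k K) (d : ℕ) : Prop :=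
  ∀ s : Finset K₀,
    AlgebraicIndependent k (fun x : {y : K₀ // y ∈ s} => (x : K₀)) → s.card ≤ d

/-- The transcendence degree of `K₀` over `k` equals `d`. -/
def TrdegEq {k K : Type*} [Field k] [Field K] [Algebra k K]
    (K₀ : IntermediateField k K) (d : ℕ) : Prop :=
  TrdegLE K₀ d ∧
  (∃ s : Finset K₀,
      AlgebraicIndependent k (fun x : {y : K₀ // y ∈ s} => (x : K₀)) ∧ s.card = d)

open Algebra in
theorem AlgebraicIndependent.card_le_of_isAlgebraic {R A ι : Type*} [CommRing R] [CommRing A]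
    [IsDomain A] [Algebra R A] [FaithfulSMul R A] [Fintype ι] {x : ι → A}
    (hx : AlgebraicIndependent R x) (B : Finset A)
    (hB : ∀ i, IsAlgebraic (adjoin R (B : Set A)) (x i)) :
    Fintype.card ι ≤ B.card := by
  have := (algebraMap R A).domain_nontrivial
  have hind : (AlgebraicIndependent.matroid R A).Indep (Set.range x) := hx.to_subtype_range
  have hsub : Set.range x ⊆ (AlgebraicIndependent.matroid R A).closure B := by
    rintro _ ⟨i, rfl⟩
    rw [AlgebraicIndependent.matroid_closure_eq]
    exact hB i
  have := hx.injective.encard_range.trans <| (hind.encard_le_eRk_of_subset hsub).trans <|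
    ((AlgebraicIndependent.matroid R A).eRk_closure_eq _).trans_le
      ((AlgebraicIndependent.matroid R A).eRk_le_encard _)
  rw [Set.encard_coe_eq_coe_finsetCard, ENat.card_eq_coe_fintype_card] at this
  exact_mod_cast this

section TrdegPredicates

open Algebra

variable {k K : Type*} [Field k] [Field K] [Algebra k K]

theorem TrdegEq.exists_finset_isAlgebraic {K₀ : IntermediateField k K} {d : ℕ}
    (h : TrdegEq K₀ d) :
    ∃ B : Finset K, B.card = d ∧ ∀ x ∈ K₀, IsAlgebraic (adjoin k (B : Set K)) x := by
  classical
  obtain ⟨hle, s, hs, rfl⟩ := h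
  refine ⟨s.image Subtype.val, Finset.card_image_of_injective _ Subtype.val_injective,
    fun x hx => by_contra fun htr => ?_⟩
  have hxs : (⟨x, hx⟩ : K₀) ∉ s := fun hmem =>
    htr (isAlgebraic_algebraMap (⟨x, subset_adjoin (Finset.mem_image_of_mem _ hmem)⟩ :
      adjoin k ((s.image Subtype.val : Finset K) : Set K)))
  have hins : AlgebraicIndepOn k K₀.val (insert ⟨x, hx⟩ (s : Set K₀)) :=
    AlgebraicIndepOn.insert (hs.map' (f := K₀.val) Subtype.val_injective)
      (by rwa [Finset.coe_image] at htr)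
  have := hle (insert ⟨x, hx⟩ s) (.of_comp K₀.val (by rwa [← Finset.coe_insert] at hins))
  rw [Finset.card_insert_of_notMem hxs] at this
  omega

theorem trdegLE_of_forall_isAlgebraic {K₀ : IntermediateField k K} (B : Finset K)
    (hB : ∀ x ∈ K₀, IsAlgebraic (adjoin k (B : Set K)) x) : TrdegLE K₀ B.card := fun s hs => by
  simpa using (hs.map' (f := K₀.val) Subtype.val_injective).card_le_of_isAlgebraic B
    fun y => hB _ y.1.2

theorem trdegLE_iSup {ι : Type*} [Fintype ι] (Ki : ι → IntermediateField k K) (d : ι → ℕ)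
    (hd : ∀ i, TrdegEq (Ki i) (d i)) : TrdegLE (⨆ i, Ki i) (∑ i, d i) := by
  classical
  choose B hBcard hB using fun i => (hd i).exists_finset_isAlgebraic
  let F := (algebraicClosure (IntermediateField.adjoin k
    ((Finset.univ.biUnion B : Finset K) : Set K)) K).restrictScalars k
  have hle : (⨆ i, Ki i) ≤ F := iSup_le fun i x hx =>
    mem_algebraicClosure_iff.2 <| IntermediateField.isAlgebraic_adjoin_iff.2 <|
      (hB i x hx).tower_top_of_subalgebra_le <| adjoin_mono <|
        Finset.coe_subset.2 (Finset.subset_biUnion_of_mem B (Finset.mem_univ i))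
  have htrdeg := trdegLE_of_forall_isAlgebraic _ fun x hx =>
    IntermediateField.isAlgebraic_adjoin_iff.1 (mem_algebraicClosure_iff.1 (hle hx))
  exact fun t ht => (htrdeg t ht).trans <|
    Finset.card_biUnion_le.trans_eq (Finset.sum_congr rfl fun i _ => hBcard i)

end TrdegPredicates

namespace Matrix

open scoped Kronecker

variable {ι : Type*} [Fintype ι] [DecidableEq ι] {m n : ι → Type*}
  [∀ i, Fintype (m i)] [∀ i, DecidableEq (m i)] [∀ i, Fintype (n i)] [∀ i, DecidableEq (n i)]

variable (m) (α : Type*) [CommSemiring α] in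
/-- `1 ⊗ₖ Aᵢ` is `Aᵢ` repeated along the diagonal once for every element of `m i`. -/
def repeatedBlockDiagonal :
    (∀ i, Matrix (n i) (n i) α) →* Matrix (Σ i, m i × n i) (Σ i, m i × n i) α where
  toFun A := blockDiagonal' fun i => (1 : Matrix (m i) (m i) α) ⊗ₖ A i
  map_one' := by simp only [Pi.one_apply, one_kronecker_one]; exact blockDiagonal'_one
  map_mul' A B := by
    simp only [Pi.mul_apply, ← blockDiagonal'_mul, ← mul_kronecker_mul, mul_one]

theorem repeatedBlockDiagonal_map {α β : Type*} [CommSemiring α] [CommSemiring β]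
    (f : α →+* β) (A : ∀ i, Matrix (n i) (n i) α) :
    (repeatedBlockDiagonal m α A).map f = repeatedBlockDiagonal m β fun i => (A i).map f := by
  simp only [repeatedBlockDiagonal, MonoidHom.coe_mk, OneHom.coe_mk,
    blockDiagonal'_map _ _ (map_zero f)]
  congr! 2 with i
  ext ⟨j, x⟩ ⟨j', y⟩
  simp [one_apply, apply_ite f]

end Matrix

namespace Matrix.GeneralLinearGroup

section RepeatedBlockDiagonal

variable {ι : Type*} [Fintype ι] [DecidableEq ι] {m n : ι → Type*}
  [∀ i, Fintype (m i)] [∀ i, DecidableEq (m i)] [∀ i, Fintype (n i)] [∀ i, DecidableEq (n i)]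
  {α β : Type*} [CommRing α] [CommRing β]

variable (m) in
def repeatedBlockDiagonal : (∀ i, GL (n i) α) →* GL (Σ i, m i × n i) α :=
  (Units.map (Matrix.repeatedBlockDiagonal m α)).comp MulEquiv.piUnits.symm.toMonoidHom

theorem map_repeatedBlockDiagonal (f : α →+* β) (A : ∀ i, GL (n i) α) :
    map f (repeatedBlockDiagonal m A) = repeatedBlockDiagonal m fun i => map f (A i) :=
  Units.ext (Matrix.repeatedBlockDiagonal_map f _)

variable (m) in
/-- The representation `a₁ρ₁ ⊕ ⋯ ⊕ a_sρ_s`, with `aᵢ` the cardinality of `m i`. -/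
def directSum {G : Type*} [Group G] (ρs : ∀ i, G →* GL (n i) α) :
    G →* GL (Σ i, m i × n i) α :=
  (repeatedBlockDiagonal m).comp (MonoidHom.pi ρs)

theorem directSum_mulVec {G : Type*} [Group G] (ρs : ∀ i, G →* GL (n i) α) (g : G)
    (v : (Σ i, m i × n i) → α) (i : ι) (j : m i) (x : n i) :
    ((directSum m ρs g : Matrix (Σ i, m i × n i) _ α) *ᵥ v) ⟨i, j, x⟩ =
      ((ρs i g : Matrix (n i) (n i) α) *ᵥ fun y => v ⟨i, j, y⟩) x := by
  simp [directSum, repeatedBlockDiagonal, Matrix.repeatedBlockDiagonal, mulVec, dotProduct,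
    blockDiagonal'_apply, Fintype.sum_sigma, Fintype.sum_prod_type, one_apply]

end RepeatedBlockDiagonal

variable {m σ : Type*} [Fintype m] [DecidableEq m] [Fintype σ] [DecidableEq σ]
  {α β : Type*} [CommRing α] [CommRing β]

def reindex (c : σ ≃ m) : GL σ α ≃* GL m α :=
  Units.mapEquiv (reindexAlgEquiv α α c).toMulEquiv

theorem map_reindex (f : α →+* β) (c : σ ≃ m) (A : GL σ α) :
    map f (reindex c A) = reindex c (map f A) :=
  rfl

theorem exists_eq_conj_reindex_of_intertwines (e : (m → α) ≃ₗ[α] (σ → α)) (c : σ ≃ m) :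
    ∃ E : GL m α, ∀ (A : GL m α) (B : GL σ α),
      (∀ v, e ((A : Matrix m m α) *ᵥ v) = (B : Matrix σ σ α) *ᵥ e v) →
        A = E⁻¹ * reindex c B * E := by
  set W := LinearMap.toMatrix' (e : (m → α) →ₗ[α] σ → α)
  set W' := LinearMap.toMatrix' (e.symm : (σ → α) →ₗ[α] m → α)
  refine ⟨⟨W.submatrix c.symm id, W'.submatrix id c.symm, ?_, ?_⟩, fun A B hAB => ?_⟩
  · rw [← submatrix_mul _ _ _ _ _ Function.bijective_id, ← LinearMap.toMatrix'_comp,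
      e.comp_symm, LinearMap.toMatrix'_id, submatrix_one_equiv]
  · rw [← submatrix_mul _ _ _ _ _ c.symm.bijective, ← LinearMap.toMatrix'_comp, e.symm_comp,
      LinearMap.toMatrix'_id, submatrix_id_id]
  · have hW : W * (A : Matrix m m α) = (B : Matrix σ σ α) * W :=
      ext_iff_mulVec.2 fun v => by
        simp only [← mulVec_mulVec, W, LinearMap.toMatrix'_mulVec, LinearEquiv.coe_coe, hAB]
    rw [mul_assoc, eq_inv_mul_iff_mul_eq]
    ext1
    change W.submatrix c.symm id * A =
      (B : Matrix σ σ α).submatrix c.symm c.symm * W.submatrix c.symm id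
    rw [← submatrix_id_id (A : Matrix m m α), ← submatrix_mul _ _ _ _ _ Function.bijective_id,
      ← submatrix_mul _ _ _ _ _ c.symm.bijective, hW]

end Matrix.GeneralLinearGroup

section Descends

variable {k K : Type*} [Field k] [Field K] [Algebra k K] {G : Type*} [Group G] {n : ℕ}

theorem Descends.mono {ρ : G →* GL (Fin n) K} {K₁ K₂ : IntermediateField k K}
    (h : Descends ρ K₁) (hle : K₁ ≤ K₂) : Descends ρ K₂ :=
  let ⟨ρ', M, hM⟩ := h
  ⟨(GeneralLinearGroup.map (IntermediateField.inclusion hle).toRingHom).comp ρ', M, hM⟩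

theorem Descends.of_conj {ρ τ : G →* GL (Fin n) K} {K₀ : IntermediateField k K}
    (h : Descends τ K₀) (N : GL (Fin n) K) (hρ : ∀ g, ρ g = N⁻¹ * τ g * N) : Descends ρ K₀ :=
  let ⟨ρ', M, hM⟩ := h
  ⟨ρ', N⁻¹ * M, fun g => by rw [hρ, hM]; group⟩

theorem Descends.reindex_directSum {ι : Type*} [Fintype ι] [DecidableEq ι]
    {m : ι → Type*} [∀ i, Fintype (m i)] [∀ i, DecidableEq (m i)] {nn : ι → ℕ}
    {ρs : ∀ i, G →* GL (Fin (nn i)) K} {K₀ : IntermediateField k K}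
    (h : ∀ i, Descends (ρs i) K₀) (c : (Σ i, m i × Fin (nn i)) ≃ Fin n) :
    Descends ((GeneralLinearGroup.reindex c).toMonoidHom.comp
      (GeneralLinearGroup.directSum m ρs)) K₀ := by
  choose ρ' M hM using h
  refine ⟨(GeneralLinearGroup.reindex c).toMonoidHom.comp (GeneralLinearGroup.directSum m ρ'),
    GeneralLinearGroup.reindex c (GeneralLinearGroup.repeatedBlockDiagonal m M), fun g => ?_⟩
  have hblocks : (fun i => ρs i g) =
      M * (fun i => GeneralLinearGroup.map (algebraMap K₀ K) (ρ' i g)) * M⁻¹ :=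
    funext fun i => hM i g
  change GeneralLinearGroup.reindex c
      (GeneralLinearGroup.repeatedBlockDiagonal m fun i => ρs i g) =
    _ * GeneralLinearGroup.map (algebraMap K₀ K) (GeneralLinearGroup.reindex c
      (GeneralLinearGroup.repeatedBlockDiagonal m fun i => ρ' i g)) * _
  simp only [hblocks, map_mul, map_inv, ← GeneralLinearGroup.map_repeatedBlockDiagonal,
    GeneralLinearGroup.map_reindex]

end Descends

theorem ed_subadditive_general {k K : Type*} [Field k] [Field K] [Algebra k K]
    {G : Type*} [Group G]
    {n s : ℕ} (nn a : Fin s → ℕ)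
    (ρ : G →* GL (Fin n) K)
    (ρs : (i : Fin s) → (G →* GL (Fin (nn i)) K))
    (e : (Fin n → K) ≃ₗ[K] (((i : Fin s) × (Fin (a i) × Fin (nn i))) → K))
    (he : ∀ (g : G) (v : Fin n → K) (i : Fin s) (j : Fin (a i)),
      (fun x => e ((ρ g : Matrix (Fin n) (Fin n) K).mulVec v) ⟨i, j, x⟩)
        = (ρs i g : Matrix (Fin (nn i)) (Fin (nn i)) K).mulVec
            (fun y => e v ⟨i, j, y⟩))
    (Ki : (i : Fin s) → IntermediateField k K) (d : Fin s → ℕ)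
    (hdesc : ∀ i, Descends (ρs i) (Ki i))
    (hd : ∀ i, TrdegEq (Ki i) (d i)) :
    ∃ K₀ : IntermediateField k K, Descends ρ K₀ ∧ TrdegLE K₀ (∑ i, d i) := by
  refine ⟨⨆ i, Ki i, ?_, trdegLE_iSup Ki d hd⟩
  have hintertwines : ∀ g v, e ((ρ g : Matrix (Fin n) (Fin n) K) *ᵥ v) =
      (GeneralLinearGroup.directSum (fun i => Fin (a i)) ρs g : Matrix _ _ K) *ᵥ e v :=
    fun g v => funext fun ⟨i, j, x⟩ => by
      rw [GeneralLinearGroup.directSum_mulVec]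
      exact congrFun (he g v i j) x
  let c : ((i : Fin s) × (Fin (a i) × Fin (nn i))) ≃ Fin n :=
    Fintype.equivOfCardEq (by simpa using e.finrank_eq.symm)
  obtain ⟨E, hE⟩ := GeneralLinearGroup.exists_eq_conj_reindex_of_intertwines e c
  exact (Descends.reindex_directSum (fun i => (hdesc i).mono (le_iSup Ki i)) c).of_conj E
    fun g => hE _ _ (hintertwines g)

/-- Subadditivity of essential dimension: if `ρ` is `K`-equivalent to a direct sum
`a₁ρ₁ ⊕ ⋯ ⊕ a_sρ_s` and each `ρᵢ` descends to an intermediate field `Kᵢ` of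
transcendence degree `dᵢ` over `k`, then `ρ` descends to an intermediate field of
transcendence degree at most `d₁ + ⋯ + d_s` over `k`. -/
theorem ed_subadditive {k K : Type*} [Field k] [Field K] [Algebra k K]
    {G : Type*} [Group G] [Finite G]
    {n s : ℕ} (nn a : Fin s → ℕ) (ha : ∀ i, 1 ≤ a i)
    (ρ : G →* GL (Fin n) K)
    (ρs : (i : Fin s) → (G →* GL (Fin (nn i)) K))
    (e : (Fin n → K) ≃ₗ[K] (((i : Fin s) × (Fin (a i) × Fin (nn i))) → K))
    (he : ∀ (g : G) (v : Fin n → K) (i : Fin s) (j : Fin (a i)),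
      (fun x => e ((ρ g : Matrix (Fin n) (Fin n) K).mulVec v) ⟨i, j, x⟩)
        = (ρs i g : Matrix (Fin (nn i)) (Fin (nn i)) K).mulVec
            (fun y => e v ⟨i, j, y⟩))
    (Ki : (i : Fin s) → IntermediateField k K) (d : Fin s → ℕ)
    (hdesc : ∀ i, Descends (ρs i) (Ki i))
    (hd : ∀ i, TrdegEq (Ki i) (d i)) :
    ∃ K₀ : IntermediateField k K, Descends ρ K₀ ∧ TrdegLE K₀ (∑ i, d i) :=
  ed_subadditive_general nn a ρ ρs e he Ki d hdesc hd
end
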